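/- Let p ≥ 5 be a prime, e ≥ 1, and A, B ∈ R = ℤ/p^eℤ with 4A³ + 27B² a unit of R. Fix a function z : R → R such that for every X with p ∣ X one has p ∣ z(X) and z(X) = X³ + A·X·z(X)² + B·z(X)³, and define the addition op as in the context. Let X ∈ R and t ≥ 1 with p^t ∣ X and ¬(p^(t+1) ∣ X), and let g : ℕ → R be the iteration with step X (g 0 = 0, g(n+1) = op (g n) X), so that g(p) is the X-coordinate of the p-fold multiple of the point at infinity (X : 1 : z(X)). Then p^(t+1) ∣ g(p), and if t + 2 ≤ e then ¬(p^(t+2) ∣ g(p)); i.e. multiplying a point at infinity by p raises the p-adic valuation of its X-coordinate by exactly one. -/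
import Mathlib


/-- First Bosma–Lenstra addition-law polynomial, specialized at `Y₁ = Y₂ = 1`. -/
def bosmaLenstraT1 {R : Type*} [CommRing R] (A B X₁ Z₁ X₂ Z₂ : R) : R :=
  (X₁ + X₂) - A * X₁ * X₂ * (Z₁ + Z₂) - A * (X₁ + X₂) * (X₁ * Z₂ + X₂ * Z₁)
    - 3 * B * (X₁ + X₂) * Z₁ * Z₂ - 3 * B * (X₁ * Z₂ + X₂ * Z₁) * (Z₁ + Z₂)
    + A ^ 2 * (Z₁ + Z₂) * Z₁ * Z₂

/-- Second Bosma–Lenstra addition-law polynomial, specialized at `Y₁ = Y₂ = 1`. -/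
def bosmaLenstraT2 {R : Type*} [CommRing R] (A B X₁ Z₁ X₂ Z₂ : R) : R :=
  1 + 3 * A * X₁ ^ 2 * X₂ ^ 2 + 9 * B * X₁ * X₂ * (X₁ * Z₂ + X₂ * Z₁)
    - A ^ 2 * X₁ * Z₂ * (X₁ * Z₂ + 2 * X₂ * Z₁)
    - A ^ 2 * X₂ * Z₁ * (2 * X₁ * Z₂ + X₂ * Z₁)
    - 3 * A * B * Z₁ * Z₂ * (X₁ * Z₂ + X₂ * Z₁)
    - (A ^ 3 + 9 * B ^ 2) * Z₁ ^ 2 * Z₂ ^ 2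

/-- `X`-coordinate of the sum of the points at infinity `(X₁ : 1 : z X₁)` and
`(X₂ : 1 : z X₂)`, computed via the Bosma–Lenstra addition law. -/
noncomputable def bosmaLenstraOp {R : Type*} [CommRing R] (A B : R) (z : R → R) (X₁ X₂ : R) : R :=
  Ring.inverse (bosmaLenstraT2 A B X₁ (z X₁) X₂ (z X₂)) *
    bosmaLenstraT1 A B X₁ (z X₁) X₂ (z X₂)

/-- `X`-coordinate of the `n`-th multiple of the point at infinity `(s : 1 : z s)`. -/
noncomputable def bosmaLenstraIter {R : Type*} [CommRing R] (A B : R) (z : R → R) (s : R) : ℕ → R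
  | 0 => 0
  | n + 1 => bosmaLenstraOp A B z (bosmaLenstraIter A B z s n) s

/-- Expansion of `T₁` when all coordinates are scaled: `X`'s by `u`, `Z`'s by `u^3`. -/
lemma bosmaLenstraT1_scaled {R : Type*} [CommRing R] (A B u x₁ z₁ x₂ z₂ : R) :
    bosmaLenstraT1 A B (u * x₁) (u ^ 3 * z₁) (u * x₂) (u ^ 3 * z₂)
      = u * (x₁ + x₂) + u ^ 5 *
        (- (A * x₁ * x₂ * (z₁ + z₂)) - A * (x₁ + x₂) * (x₁ * z₂ + x₂ * z₁)
          - 3 * B * (x₁ + x₂) * z₁ * z₂ * u ^ 2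
          - 3 * B * (x₁ * z₂ + x₂ * z₁) * (z₁ + z₂) * u ^ 2
          + A ^ 2 * (z₁ + z₂) * z₁ * z₂ * u ^ 4) := by
  simp only [bosmaLenstraT1]; ring

/-- Expansion of `T₂` when all coordinates are scaled: `X`'s by `u`, `Z`'s by `u^3`. -/
lemma bosmaLenstraT2_scaled {R : Type*} [CommRing R] (A B u x₁ z₁ x₂ z₂ : R) :
    bosmaLenstraT2 A B (u * x₁) (u ^ 3 * z₁) (u * x₂) (u ^ 3 * z₂)
      = 1 + u ^ 4 *
        (3 * A * x₁ ^ 2 * x₂ ^ 2 + 9 * B * x₁ * x₂ * (x₁ * z₂ + x₂ * z₁) * u ^ 2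
          - A ^ 2 * x₁ * z₂ * (x₁ * z₂ + 2 * x₂ * z₁) * u ^ 4
          - A ^ 2 * x₂ * z₁ * (2 * x₁ * z₂ + x₂ * z₁) * u ^ 4
          - 3 * A * B * z₁ * z₂ * (x₁ * z₂ + x₂ * z₁) * u ^ 6
          - (A ^ 3 + 9 * B ^ 2) * z₁ ^ 2 * z₂ ^ 2 * u ^ 8) := by
  simp only [bosmaLenstraT2]; ring

lemma inverse_one_add_mul_sub {R : Type*} [CommRing R] {u Q : R} (s P : R)
    (hnil : IsNilpotent (u ^ 4 * Q)) :
    u ^ 5 ∣ Ring.inverse (1 + u ^ 4 * Q) * (u * s + u ^ 5 * P) - u * s := by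
  have hinv : Ring.inverse (1 + u ^ 4 * Q) * (1 + u ^ 4 * Q) = 1 :=
    Ring.inverse_mul_cancel _ hnil.isUnit_one_add
  have key : Ring.inverse (1 + u ^ 4 * Q) * (u * s + u ^ 5 * P) - u * s
      = Ring.inverse (1 + u ^ 4 * Q) * (u ^ 5 * (P - Q * s)) := by
    have h2 : (u * s + u ^ 5 * P) - (1 + u ^ 4 * Q) * (u * s) = u ^ 5 * (P - Q * s) := by ring
    calc Ring.inverse (1 + u ^ 4 * Q) * (u * s + u ^ 5 * P) - u * s
        = Ring.inverse (1 + u ^ 4 * Q) *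
            ((u * s + u ^ 5 * P) - (1 + u ^ 4 * Q) * (u * s)) := by
          rw [mul_sub, ← mul_assoc, hinv, one_mul]
      _ = Ring.inverse (1 + u ^ 4 * Q) * (u ^ 5 * (P - Q * s)) := by rw [h2]
  rw [key]
  exact (dvd_mul_right _ _).mul_left _

/-- The addition law is addition to first order, with error of order `u^5`. -/
lemma bosmaLenstraOp_sub_add {R : Type*} [CommRing R] (A B : R) (z : R → R) {u X₁ X₂ : R}
    (hu : IsNilpotent u) (h₁ : u ∣ X₁) (h₂ : u ∣ X₂)
    (hz₁ : u ^ 3 ∣ z X₁) (hz₂ : u ^ 3 ∣ z X₂) :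
    u ^ 5 ∣ bosmaLenstraOp A B z X₁ X₂ - (X₁ + X₂) := by
  obtain ⟨x₁, rfl⟩ := h₁
  obtain ⟨x₂, rfl⟩ := h₂
  obtain ⟨z₁, hZ₁⟩ := hz₁
  obtain ⟨z₂, hZ₂⟩ := hz₂
  obtain ⟨m, hm⟩ := hu
  have hsum : u * x₁ + u * x₂ = u * (x₁ + x₂) := by ring
  rw [bosmaLenstraOp, hZ₁, hZ₂, bosmaLenstraT1_scaled, bosmaLenstraT2_scaled, hsum]
  exact inverse_one_add_mul_sub _ _
    ⟨m, by rw [mul_pow, ← pow_mul, mul_comm 4 m, pow_mul, hm]; simp⟩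

/-- Multiplying a point at infinity of `E_{A,B}(ℤ/p^eℤ)` by `p` raises the `p`-adic
valuation of its `X`-coordinate by exactly one: if `p^t ∥ X` then the `X`-coordinate
of `p·(X : 1 : z X)` is exactly divisible by `p^(t+1)`. -/
theorem mul_by_p_raises_valuation_by_one
    {p : ℕ} (hp : p.Prime) (hp5 : 5 ≤ p) {e : ℕ} (he : 1 ≤ e)
    (A B : ZMod (p ^ e)) (hdisc : IsUnit (4 * A ^ 3 + 27 * B ^ 2))
    (z : ZMod (p ^ e) → ZMod (p ^ e))
    (hz : ∀ X : ZMod (p ^ e), (p : ZMod (p ^ e)) ∣ X →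
      (p : ZMod (p ^ e)) ∣ z X ∧ z X = X ^ 3 + A * X * (z X) ^ 2 + B * (z X) ^ 3)
    (X : ZMod (p ^ e)) {t : ℕ} (ht : 1 ≤ t)
    (hXt : (p : ZMod (p ^ e)) ^ t ∣ X) (hXt' : ¬ (p : ZMod (p ^ e)) ^ (t + 1) ∣ X) :
    (p : ZMod (p ^ e)) ^ (t + 1) ∣ bosmaLenstraIter A B z X p ∧
      (t + 2 ≤ e → ¬ (p : ZMod (p ^ e)) ^ (t + 2) ∣ bosmaLenstraIter A B z X p) := by
  set q : ZMod (p ^ e) := (p : ZMod (p ^ e)) with hqdef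
  haveI : NeZero (p ^ e) := ⟨pow_ne_zero e hp.ne_zero⟩
  have hq0 : q ^ e = 0 := by rw [hqdef, ← Nat.cast_pow, ZMod.natCast_self]
  have hunil : IsNilpotent (q ^ t) :=
    ⟨e, by rw [← pow_mul, mul_comm, pow_mul, hq0, zero_pow (by omega : t ≠ 0)]⟩
  -- valuation of z
  have hzdvd : ∀ Y : ZMod (p ^ e), q ^ t ∣ Y → ∀ k, 1 ≤ k → k ≤ 3 * t → q ^ k ∣ z Y := by
    intro Y hY k
    have hpY : q ∣ Y := (dvd_pow_self q (by omega : t ≠ 0)).trans hY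
    obtain ⟨hz1, heq⟩ := hz Y hpY
    induction k with
    | zero => omega
    | succ k ih =>
      intro _ hk3
      rcases Nat.eq_zero_or_pos k with hk | hk
      · subst hk; simpa using hz1
      · have hzk : q ^ k ∣ z Y := ih hk (by omega)
        rw [heq]
        have d1 : q ^ (k + 1) ∣ Y ^ 3 := by
          refine (pow_dvd_pow q (show k + 1 ≤ t * 3 by omega)).trans ?_
          rw [pow_mul]; exact pow_dvd_pow_of_dvd hY 3
        have d2 : q ^ (k + 1) ∣ A * Y * z Y ^ 2 := by
          have h' : q ^ (t + k * 2) ∣ Y * z Y ^ 2 := by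
            rw [pow_add, pow_mul]; exact mul_dvd_mul hY (pow_dvd_pow_of_dvd hzk 2)
          refine (pow_dvd_pow q (show k + 1 ≤ t + k * 2 by omega)).trans ?_
          rw [mul_assoc]; exact h'.mul_left A
        have d3 : q ^ (k + 1) ∣ B * z Y ^ 3 := by
          have h' : q ^ (k * 3) ∣ z Y ^ 3 := by
            rw [pow_mul]; exact pow_dvd_pow_of_dvd hzk 3
          exact (pow_dvd_pow q (show k + 1 ≤ k * 3 by omega)).trans (h'.mul_left B)
        exact dvd_add (dvd_add d1 d2) d3
  have hz3 : ∀ Y : ZMod (p ^ e), q ^ t ∣ Y → (q ^ t) ^ 3 ∣ z Y := by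
    intro Y hY
    rw [← pow_mul]
    exact hzdvd Y hY (t * 3) (by omega) (by omega)
  -- iteration
  have hiter : ∀ n : ℕ, q ^ (t * 3) ∣ bosmaLenstraIter A B z X n - (n : ZMod (p ^ e)) * X ∧
      q ^ t ∣ bosmaLenstraIter A B z X n := by
    intro n
    induction n with
    | zero => simp [bosmaLenstraIter]
    | succ n ih =>
      obtain ⟨ih1, ih2⟩ := ih
      have hstep : (q ^ t) ^ 5 ∣
          bosmaLenstraOp A B z (bosmaLenstraIter A B z X n) X
            - (bosmaLenstraIter A B z X n + X) :=
        bosmaLenstraOp_sub_add A B z hunil ih2 hXt (hz3 _ ih2) (hz3 _ hXt)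
      have hstep' : q ^ (t * 3) ∣
          bosmaLenstraOp A B z (bosmaLenstraIter A B z X n) X
            - (bosmaLenstraIter A B z X n + X) := by
        rw [pow_mul]
        exact (pow_dvd_pow _ (by norm_num)).trans hstep
      have h1 : q ^ (t * 3) ∣
          bosmaLenstraIter A B z X (n + 1) - ((n + 1 : ℕ) : ZMod (p ^ e)) * X := by
        have hrw : bosmaLenstraIter A B z X (n + 1) - ((n + 1 : ℕ) : ZMod (p ^ e)) * X
            = (bosmaLenstraOp A B z (bosmaLenstraIter A B z X n) X
                - (bosmaLenstraIter A B z X n + X))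
              + (bosmaLenstraIter A B z X n - (n : ZMod (p ^ e)) * X) := by
          show bosmaLenstraOp A B z (bosmaLenstraIter A B z X n) X - _ = _
          push_cast
          ring
        rw [hrw]
        exact dvd_add hstep' ih1
      refine ⟨h1, ?_⟩
      have hrw2 : bosmaLenstraIter A B z X (n + 1)
          = (bosmaLenstraIter A B z X (n + 1) - ((n + 1 : ℕ) : ZMod (p ^ e)) * X)
            + ((n + 1 : ℕ) : ZMod (p ^ e)) * X := by ring
      rw [hrw2]
      exact dvd_add ((pow_dvd_pow q (by omega : t ≤ t * 3)).trans h1) (hXt.mul_left _)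
  obtain ⟨hg1, _⟩ := hiter p
  -- killing lemma
  have hpk : ∀ a : ZMod (p ^ e), q * a = 0 → q ^ (e - 1) ∣ a := by
    intro a ha
    have h1 : ((p * a.val : ℕ) : ZMod (p ^ e)) = 0 := by
      push_cast
      rw [ZMod.natCast_zmod_val]
      exact ha
    rw [ZMod.natCast_eq_zero_iff] at h1
    obtain ⟨c, hc⟩ := h1
    have he' : p ^ e = p * p ^ (e - 1) := by
      rw [← pow_succ']
      congr 1
      omega
    have h2 : a.val = p ^ (e - 1) * c := by
      apply Nat.eq_of_mul_eq_mul_left hp.pos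
      rw [hc, he']
      ring
    have h3 : a = ((a.val : ℕ) : ZMod (p ^ e)) := (ZMod.natCast_zmod_val a).symm
    rw [h3, h2]
    push_cast
    exact dvd_mul_right _ _
  constructor
  · have hx1 : q ^ (t + 1) ∣ q * X := by
      rw [pow_succ]
      have h := mul_dvd_mul hXt (dvd_refl q)
      rwa [mul_comm X q] at h
    have hrw : bosmaLenstraIter A B z X p
        = (bosmaLenstraIter A B z X p - (p : ZMod (p ^ e)) * X)
          + (p : ZMod (p ^ e)) * X := by ring
    rw [hrw]
    exact dvd_add ((pow_dvd_pow q (by omega : t + 1 ≤ t * 3)).trans hg1) hx1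
  · intro he2 hcon
    have h1 : q ^ (t + 2) ∣ q * X := by
      have hrw : q * X = bosmaLenstraIter A B z X p
          - (bosmaLenstraIter A B z X p - (p : ZMod (p ^ e)) * X) := by
        rw [← hqdef]; ring
      rw [hrw]
      exact dvd_sub hcon ((pow_dvd_pow q (by omega : t + 2 ≤ t * 3)).trans hg1)
    obtain ⟨c, hc⟩ := h1
    have h0 : q * (X - q ^ (t + 1) * c) = 0 := by
      rw [mul_sub, hc]
      ring
    have h2 := hpk _ h0
    apply hXt'
    have hrw : X = (X - q ^ (t + 1) * c) + q ^ (t + 1) * c := by ring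
    rw [hrw]
    exact dvd_add ((pow_dvd_pow q (by omega : t + 1 ≤ e - 1)).trans h2) (dvd_mul_right _ _)
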